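/- Let R be a Noetherian ring, I = (f_1,…,f_r), a = (a_1,…,a_s) ⊆ I with (a_1 … a_s) = (f_1 … f_r)·C for an r×s matrix C over R. Let S = R[t_1,…,t_r], γ_j = Σ_i c_{ij} t_i, and let L ⊆ S be the defining ideal of the symmetric algebra Sym(I) with respect to f_1,…,f_r. If I = a, then (γ_1,…,γ_s) + L = (t_1,…,t_r) as ideals of S. -/

import Mathlib

/-!
Writing `ℓ : R^r → S` for `b ↦ ∑ bᵢ tᵢ` and `ev_f : R^r → R` for `b ↦ ∑ bᵢ fᵢ`, we have
`γ_j = ℓ(C e_j)`, `L = (ℓ(ker ev_f))` and `(t_1, …, t_r) = (ℓ(R^r))`. Since `ev_f` maps the column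
span of `C` onto `𝔞 = I = ev_f(R^r)`, the column span and `ker ev_f` together span `R^r`, and
applying `ℓ` gives the claim.
-/

noncomputable section

open MvPolynomial

/-- The defining ideal `L` of the symmetric algebra of `I = (f 0, …, f (r-1))` inside
`S = R[t_1,…,t_r]`: the ideal generated by the linear forms coming from the syzygies of `f`. -/
noncomputable def symDefIdeal {R : Type*} [CommRing R] {r : ℕ} (f : Fin r → R) :
    Ideal (MvPolynomial (Fin r) R) :=
  Ideal.span {q | ∃ b : Fin r → R, (∑ i, b i * f i = 0) ∧
    q = ∑ i, MvPolynomial.C (b i) * MvPolynomial.X i}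

/-- The linear form `γ_j = ∑ i, c_{ij} t_i` associated to a matrix `C = (c_{ij})`. -/
noncomputable def gammaForm {R : Type*} [CommRing R] {r s : ℕ}
    (C : Matrix (Fin r) (Fin s) R) (j : Fin s) : MvPolynomial (Fin r) R :=
  ∑ i, MvPolynomial.C (C i j) * MvPolynomial.X i

section LinearImage

variable {R S M : Type*} [CommSemiring R] [CommSemiring S] [Algebra R S]
  [AddCommMonoid M] [Module R M]

theorem Ideal.span_image_span (φ : M →ₗ[R] S) (s : Set M) :
    Ideal.span (φ '' ↑(Submodule.span R s)) = Ideal.span (φ '' s) := by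
  rw [← Submodule.map_coe, Submodule.map_span]
  exact Submodule.span_span_of_tower R S _

theorem Ideal.span_image_sup (φ : M →ₗ[R] S) (p q : Submodule R M) :
    Ideal.span (φ '' ↑(p ⊔ q)) = Ideal.span (φ '' ↑p) ⊔ Ideal.span (φ '' ↑q) := by
  have hpq : p ⊔ q = Submodule.span R (↑p ∪ ↑q) := by
    rw [Submodule.span_union, Submodule.span_eq, Submodule.span_eq]
  rw [hpq, Ideal.span_image_span, Set.image_union, Ideal.span_union]

theorem Ideal.span_range_linearCombination {ι : Type*} [Fintype ι] (v : ι → S) :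
    Ideal.span (Set.range (Fintype.linearCombination R v)) = Ideal.span (Set.range v) := by
  rw [← LinearMap.coe_range, Fintype.range_linearCombination]
  exact Submodule.span_span_of_tower R S _

end LinearImage

section SymmetricAlgebra

variable {R : Type*} [CommRing R] {r s : ℕ}

theorem gammaForm_eq_linearCombination (C : Matrix (Fin r) (Fin s) R) (j : Fin s) :
    gammaForm C j = Fintype.linearCombination R X (fun i => C i j) := by
  simp [gammaForm, Fintype.linearCombination_apply, smul_eq_C_mul]

theorem symDefIdeal_eq_span_image_ker (f : Fin r → R) :
    symDefIdeal f = Ideal.span (Fintype.linearCombination R X ''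
      ↑(LinearMap.ker (Fintype.linearCombination R f))) := by
  unfold symDefIdeal
  congr 1
  ext q
  simp [Fintype.linearCombination_apply, smul_eq_C_mul, eq_comm]

theorem span_col_sup_ker_linearCombination_eq_top (f : Fin r → R) (a : Fin s → R)
    (C : Matrix (Fin r) (Fin s) R) (hC : ∀ j, a j = ∑ i, C i j * f i)
    (hIa : Ideal.span (Set.range a) = Ideal.span (Set.range f)) :
    Submodule.span R (Set.range fun j i => C i j) ⊔
      LinearMap.ker (Fintype.linearCombination R f) = ⊤ := by
  have hev : (Fintype.linearCombination R f ∘ fun j i => C i j) = a := by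
    ext j
    simp [Fintype.linearCombination_apply, hC]
  refine codisjoint_iff.mp (Submodule.map_eq_range_iff.mp ?_)
  rw [Submodule.map_span, ← Set.range_comp, hev, Fintype.range_linearCombination]
  exact hIa

end SymmetricAlgebra

theorem gamma_sup_symDefIdeal_eq_general {R : Type*} [CommRing R] {r s : ℕ}
    (f : Fin r → R) (a : Fin s → R) (C : Matrix (Fin r) (Fin s) R)
    (hC : ∀ j, a j = ∑ i, C i j * f i)
    (hIa : Ideal.span (Set.range a) = Ideal.span (Set.range f)) :
    Ideal.span (Set.range (gammaForm C)) ⊔ symDefIdeal f =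
      Ideal.span (Set.range (MvPolynomial.X : Fin r → MvPolynomial (Fin r) R)) := by
  set ℓ := Fintype.linearCombination R (X : Fin r → MvPolynomial (Fin r) R)
  have hγ : Set.range (gammaForm C) = ℓ '' Set.range fun j i => C i j := by
    rw [← Set.range_comp]
    exact congrArg Set.range (funext (gammaForm_eq_linearCombination C))
  calc Ideal.span (Set.range (gammaForm C)) ⊔ symDefIdeal f
      = Ideal.span (ℓ '' ↑(Submodule.span R (Set.range fun j i => C i j))) ⊔
          Ideal.span (ℓ '' ↑(LinearMap.ker (Fintype.linearCombination R f))) := by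
        rw [hγ, Ideal.span_image_span, symDefIdeal_eq_span_image_ker]
    _ = Ideal.span (ℓ '' ↑(Submodule.span R (Set.range fun j i => C i j) ⊔
          LinearMap.ker (Fintype.linearCombination R f))) :=
        (Ideal.span_image_sup ℓ _ _).symm
    _ = Ideal.span (Set.range ℓ) := by
        rw [span_col_sup_ker_linearCombination_eq_top f a C hC hIa, Submodule.top_coe,
          Set.image_univ]
    _ = Ideal.span (Set.range X) := Ideal.span_range_linearCombination X

/-- if `I = 𝔞`, then `(γ_1,…,γ_s) + L = (t_1,…,t_r)` in `S = R[t_1,…,t_r]`,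
where `L` is the defining ideal of the symmetric algebra of `I` and `γ_j = ∑ i, c_{ij} t_i`
with `a_j = ∑ i, c_{ij} f_i`. -/
theorem gamma_sup_symDefIdeal_eq {R : Type*} [CommRing R] [IsNoetherianRing R] {r s : ℕ}
    (f : Fin r → R) (a : Fin s → R) (C : Matrix (Fin r) (Fin s) R)
    (hC : ∀ j, a j = ∑ i, C i j * f i)
    (hIa : Ideal.span (Set.range a) = Ideal.span (Set.range f)) :
    Ideal.span (Set.range (gammaForm C)) ⊔ symDefIdeal f =
      Ideal.span (Set.range (MvPolynomial.X : Fin r → MvPolynomial (Fin r) R)) :=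
  gamma_sup_symDefIdeal_eq_general f a C hC hIa

end
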